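/- arXiv:2102.07376 — 3 statements merged into one kernel-verified Lean document; each statement's English description precedes it below -/
import Mathlib

section
/- (Part of Theorem 4.1.) Let (D1, M) be a consistent periodic first-derivative SBP operator (M symmetric positive definite and diagonal, M·D1 + D1ᵀ·M = 0, D1·𝟙 = 0) and D2 a consistent periodic second-derivative SBP operator with the same diagonal mass matrix M (M·D2 = −A2, A2 symmetric positive semidefinite, D2·𝟙 = 0). Let η, u : ℝ → ℝ^m be differentiable and satisfy ∂ₜη = −(I − D2)⁻¹·D1·(u + η∘u), ∂ₜu = −(I − D2)⁻¹·(D1·η + u∘(D1·u)) for all t. Then the discrete total mass of u, namely 𝟙ᵀ·M·u(t), is constant in t. -/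
/-!
The total mass `𝟙ᵀ M u` has time derivative `-𝟙ᵀ M (I - D2)⁻¹ (D1 η + u ∘ D1 u)`.
Since `M D2 = -A2` is symmetric and `D2 𝟙 = 0`, the row vector `𝟙ᵀ M` is fixed by `I - D2`,
so the inverse can be dropped. Then `𝟙ᵀ M D1 η = -(D1 𝟙)ᵀ M η = 0` by the SBP property, and
for diagonal `M` the split-form term `𝟙ᵀ M (u ∘ D1 u) = uᵀ M D1 u` vanishes because `M D1` is
skew-symmetric.
-/

open Matrix

theorem HasDerivAt.const_dotProduct {ι : Type*} [Fintype ι] (c : ι → ℝ) {u : ℝ → ι → ℝ}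
    {u' : ι → ℝ} {t : ℝ} (hu : HasDerivAt u u' t) :
    HasDerivAt (fun s => c ⬝ᵥ u s) (c ⬝ᵥ u') t :=
  HasDerivAt.fun_sum fun i _ => (hasDerivAt_pi.mp hu i).const_mul (c i)

theorem dotProduct_eq_of_hasDerivAt {ι : Type*} [Fintype ι] (c : ι → ℝ) {u u' : ℝ → ι → ℝ}
    (hu : ∀ t, HasDerivAt u (u' t) t) (h : ∀ t, c ⬝ᵥ u' t = 0) (t₁ t₂ : ℝ) :
    c ⬝ᵥ u t₁ = c ⬝ᵥ u t₂ := by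
  have hderiv : ∀ t, HasDerivAt (fun s => c ⬝ᵥ u s) 0 t := fun t => by
    simpa only [h t] using (hu t).const_dotProduct c
  exact is_const_of_deriv_eq_zero (fun t => (hderiv t).differentiableAt)
    (fun t => (hderiv t).deriv) t₁ t₂

namespace Matrix

variable {ι : Type*} [Fintype ι] {M D A : Matrix ι ι ℝ}

theorem dotProduct_mulVec_mulVec_eq_neg (h : M * D + Dᵀ * M = 0) (v x : ι → ℝ) :
    v ⬝ᵥ (M *ᵥ (D *ᵥ x)) = -((D *ᵥ v) ⬝ᵥ (M *ᵥ x)) := by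
  rw [mulVec_mulVec, eq_neg_of_add_eq_zero_left h, neg_mulVec, dotProduct_neg,
    ← mulVec_mulVec, dotProduct_mulVec, ← mulVec_transpose, transpose_transpose]

theorem one_dotProduct_mulVec_mulVec_eq_zero_of_add_transpose_mul_eq_zero
    (h : M * D + Dᵀ * M = 0) (hD : D *ᵥ 1 = 0) (x : ι → ℝ) :
    1 ⬝ᵥ (M *ᵥ (D *ᵥ x)) = 0 := by
  rw [dotProduct_mulVec_mulVec_eq_neg h, hD, zero_dotProduct, neg_zero]

theorem dotProduct_mulVec_mulVec_self_eq_zero (hM : M.IsSymm) (h : M * D + Dᵀ * M = 0)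
    (x : ι → ℝ) : x ⬝ᵥ (M *ᵥ (D *ᵥ x)) = 0 := by
  have hswap : (D *ᵥ x) ⬝ᵥ (M *ᵥ x) = x ⬝ᵥ (M *ᵥ (D *ᵥ x)) := by
    rw [dotProduct_mulVec x M, ← mulVec_transpose, hM.eq, dotProduct_comm]
  linarith [dotProduct_mulVec_mulVec_eq_neg h x x]

theorem IsDiag.one_dotProduct_mulVec_mul (hM : M.IsDiag) (x y : ι → ℝ) :
    1 ⬝ᵥ (M *ᵥ (x * y)) = x ⬝ᵥ (M *ᵥ y) := by
  classical
  rw [← hM.diagonal_diag]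
  simp only [dotProduct, mulVec_diagonal, Pi.one_apply, Pi.mul_apply, one_mul]
  exact Finset.sum_congr rfl fun i _ => by ring

theorem one_dotProduct_mulVec_mulVec_eq_zero_of_isSymm (hMD : (M * D).IsSymm)
    (hD : D *ᵥ 1 = 0) (x : ι → ℝ) : 1 ⬝ᵥ (M *ᵥ (D *ᵥ x)) = 0 := by
  rw [mulVec_mulVec, dotProduct_mulVec, ← mulVec_transpose, hMD.eq, ← mulVec_mulVec, hD,
    mulVec_zero, zero_dotProduct]

theorem isUnit_det_one_sub_of_mul_eq_neg [DecidableEq ι] (hM : M.PosDef) (hA : A.PosSemidef)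
    (hMD : M * D = -A) : IsUnit (1 - D).det := by
  have hMA : M * (1 - D) = M + A := by rw [mul_sub, mul_one, hMD, sub_neg_eq_add]
  have hdet : IsUnit (M * (1 - D)).det := by
    rw [hMA]
    exact (hM.add_posSemidef hA).det_pos.ne'.isUnit
  rw [det_mul] at hdet
  exact isUnit_of_mul_isUnit_right hdet

theorem one_dotProduct_mulVec_nonsing_inv_one_sub [DecidableEq ι] (hdet : IsUnit (1 - D).det)
    (hD : ∀ y, 1 ⬝ᵥ (M *ᵥ (D *ᵥ y)) = 0) (x : ι → ℝ) :
    1 ⬝ᵥ (M *ᵥ ((1 - D)⁻¹ *ᵥ x)) = 1 ⬝ᵥ (M *ᵥ x) := by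
  set y := (1 - D)⁻¹ *ᵥ x
  have hx : x = (1 - D) *ᵥ y := by
    rw [mulVec_mulVec, mul_nonsing_inv _ hdet, one_mulVec]
  rw [hx, sub_mulVec, one_mulVec, mulVec_sub, dotProduct_sub, hD, sub_zero]

end Matrix

theorem bbm_bbm_split_form_conserves_total_mass_u_general
    (m : ℕ) (D1 D2 M A2 : Matrix (Fin m) (Fin m) ℝ)
    (hM : M.PosDef) (hMdiag : M.IsDiag)
    (hD1 : M * D1 + D1ᵀ * M = 0)
    (hD1cons : D1 *ᵥ (1 : Fin m → ℝ) = 0)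
    (hA2 : A2.PosSemidef)
    (hD2 : M * D2 = -A2)
    (hD2cons : D2 *ᵥ (1 : Fin m → ℝ) = 0)
    (η u : ℝ → Fin m → ℝ)
    (hu : ∀ t, HasDerivAt u (-((1 - D2)⁻¹ *ᵥ (D1 *ᵥ η t + u t * (D1 *ᵥ u t)))) t) :
    ∀ t₁ t₂ : ℝ,
      (1 : Fin m → ℝ) ⬝ᵥ (M *ᵥ u t₁) = (1 : Fin m → ℝ) ⬝ᵥ (M *ᵥ u t₂) := by
  have hMD2 : (M * D2).IsSymm := by
    rw [hD2]
    exact (isHermitian_iff_isSymm.mp hA2.isHermitian).neg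
  have hinv := one_dotProduct_mulVec_nonsing_inv_one_sub
    (isUnit_det_one_sub_of_mul_eq_neg hM hA2 hD2)
    (one_dotProduct_mulVec_mulVec_eq_zero_of_isSymm hMD2 hD2cons)
  have hrate : ∀ t, (1 ᵥ* M) ⬝ᵥ -((1 - D2)⁻¹ *ᵥ (D1 *ᵥ η t + u t * (D1 *ᵥ u t))) = 0 := by
    intro t
    rw [← dotProduct_mulVec, mulVec_neg, dotProduct_neg, hinv, mulVec_add, dotProduct_add,
      one_dotProduct_mulVec_mulVec_eq_zero_of_add_transpose_mul_eq_zero hD1 hD1cons,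
      hMdiag.one_dotProduct_mulVec_mul,
      dotProduct_mulVec_mulVec_self_eq_zero hMdiag.isSymm hD1, add_zero, neg_zero]
  intro t₁ t₂
  simpa only [dotProduct_mulVec] using dotProduct_eq_of_hasDerivAt _ hu hrate t₁ t₂

/-- For the split-form BBM-BBM semidiscretization
`∂ₜη = −(I − D2)⁻¹ D1 (u + η∘u)`, `∂ₜu = −(I − D2)⁻¹ (D1 η + u∘(D1 u))`
with consistent periodic SBP operators `D1`, `D2` sharing a diagonal
symmetric positive definite mass matrix `M`, the discrete total mass
`𝟙ᵀ·M·u(t)` is constant in time. -/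
theorem bbm_bbm_split_form_conserves_total_mass_u
    (m : ℕ) (D1 D2 M A2 : Matrix (Fin m) (Fin m) ℝ)
    (hM : M.PosDef) (hMdiag : M.IsDiag)
    (hD1 : M * D1 + D1ᵀ * M = 0)
    (hD1cons : D1 *ᵥ (1 : Fin m → ℝ) = 0)
    (hA2 : A2.PosSemidef)
    (hD2 : M * D2 = -A2)
    (hD2cons : D2 *ᵥ (1 : Fin m → ℝ) = 0)
    (η u : ℝ → Fin m → ℝ)
    (hη : ∀ t, HasDerivAt η (-((1 - D2)⁻¹ *ᵥ (D1 *ᵥ (u t + η t * u t)))) t)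
    (hu : ∀ t, HasDerivAt u (-((1 - D2)⁻¹ *ᵥ (D1 *ᵥ η t + u t * (D1 *ᵥ u t)))) t) :
    ∀ t₁ t₂ : ℝ,
      (1 : Fin m → ℝ) ⬝ᵥ (M *ᵥ u t₁) = (1 : Fin m → ℝ) ⬝ᵥ (M *ᵥ u t₂) :=
  bbm_bbm_split_form_conserves_total_mass_u_general m D1 D2 M A2 hM hMdiag hD1 hD1cons hA2 hD2
    hD2cons η u hu
end

section
/- (Part of Theorem 6.1.) Let (D1, M) be a consistent periodic first-derivative SBP operator with diagonal mass matrix (M symmetric positive definite and diagonal, M·D1 + D1ᵀ·M = 0, D1·𝟙 = 0). Let ρ ∈ ℝ^m have strictly positive components and K ∈ ℝ^m have strictly positive components; define σ(ε)ᵢ = exp(Kᵢ·εᵢ) − 1 for ε ∈ ℝ^m. Let ε, u : ℝ → ℝ^m be differentiable and satisfy ∂ₜε = D1·u, ∂ₜuᵢ = ρᵢ⁻¹·(D1·σ(ε))ᵢ for all t and all i. Then the discrete total momentum 𝟙ᵀ·M·(ρ∘u(t)) is constant in t, where ∘ denotes the componentwise product. -/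
open Matrix

/-!
Differentiating, the rate of change of the momentum `𝟙ᵀ M (ρ ∘ u)` is `𝟙ᵀ M D1 σ(ε)`, since `ρ`
cancels against the `ρ⁻¹` in the momentum equation. The SBP property `M D1 = -D1ᵀ M` together
with consistency `D1 𝟙 = 0` gives `𝟙ᵀ M D1 = -(D1 𝟙)ᵀ M = 0`, whatever `σ` is.
-/

theorem Matrix.one_vecMul_mul_eq_zero {n R : Type*} [Fintype n] [CommRing R]
    {D M : Matrix n n R} (hsbp : M * D + Dᵀ * M = 0) (hcons : D *ᵥ 1 = 0) :
    (1 : n → R) ᵥ* (M * D) = 0 := by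
  rw [eq_neg_of_add_eq_zero_left hsbp, vecMul_neg, ← vecMul_vecMul, vecMul_transpose, hcons,
    zero_vecMul, neg_zero]

theorem HasDerivAt.const_dotProduct_s10 {n : Type*} [Fintype n] (w : n → ℝ) {f : ℝ → n → ℝ}
    {f' : n → ℝ} {t : ℝ} (hf : HasDerivAt f f' t) :
    HasDerivAt (fun s => w ⬝ᵥ f s) (w ⬝ᵥ f') t := by
  simp only [dotProduct]
  exact HasDerivAt.fun_sum fun i _ => (hasDerivAt_pi.1 hf i).const_mul (w i)

theorem p_system_conserves_total_momentum_general
    (m : ℕ) (D1 M : Matrix (Fin m) (Fin m) ℝ)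
    (hD1 : M * D1 + D1ᵀ * M = 0)
    (hD1cons : D1 *ᵥ (1 : Fin m → ℝ) = 0)
    (ρ K : Fin m → ℝ)
    (hρ : ∀ i, 0 < ρ i)
    (ε u : ℝ → Fin m → ℝ)
    (hu : ∀ t, HasDerivAt u
      (fun i => (ρ i)⁻¹ * (D1 *ᵥ (fun j => Real.exp (K j * ε t j) - 1)) i) t) :
    ∀ t₁ t₂ : ℝ,
      (1 : Fin m → ℝ) ⬝ᵥ (M *ᵥ (ρ * u t₁)) = (1 : Fin m → ℝ) ⬝ᵥ (M *ᵥ (ρ * u t₂)) := by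
  have hmomentum : ∀ t, HasDerivAt (fun s => (1 : Fin m → ℝ) ⬝ᵥ (M *ᵥ (ρ * u s))) 0 t := by
    intro t
    have hcancel : ∀ x : Fin m → ℝ, ρ * (fun i => (ρ i)⁻¹ * x i) = x :=
      fun x => funext fun i => mul_inv_cancel_left₀ (hρ i).ne' _
    have hflux : ∀ x, (1 ᵥ* M) ⬝ᵥ (D1 *ᵥ x) = 0 := fun x => by
      rw [dotProduct_mulVec, vecMul_vecMul, one_vecMul_mul_eq_zero hD1 hD1cons, zero_dotProduct]
    have hderiv := ((hu t).const_mul ρ).const_dotProduct_s10 (1 ᵥ* M)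
    rw [hcancel, hflux] at hderiv
    simpa only [dotProduct_mulVec] using hderiv
  exact is_const_of_deriv_eq_zero (fun t => (hmomentum t).differentiableAt)
    (fun t => (hmomentum t).deriv)

/-- For the semidiscretized variable-coefficient p-system
`∂ₜε = D1 u`, `∂ₜuᵢ = ρᵢ⁻¹ (D1 σ(ε))ᵢ` with `σ(ε)ᵢ = exp(Kᵢ εᵢ) − 1`
and `(D1, M)` a consistent periodic first-derivative SBP operator with
diagonal mass matrix, the discrete total momentum `𝟙ᵀ·M·(ρ∘u(t))` is constant. -/
theorem p_system_conserves_total_momentum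
    (m : ℕ) (D1 M : Matrix (Fin m) (Fin m) ℝ)
    (hM : M.PosDef) (hMdiag : M.IsDiag)
    (hD1 : M * D1 + D1ᵀ * M = 0)
    (hD1cons : D1 *ᵥ (1 : Fin m → ℝ) = 0)
    (ρ K : Fin m → ℝ)
    (hρ : ∀ i, 0 < ρ i) (hK : ∀ i, 0 < K i)
    (ε u : ℝ → Fin m → ℝ)
    (hε : ∀ t, HasDerivAt ε (D1 *ᵥ u t) t)
    (hu : ∀ t, HasDerivAt u
      (fun i => (ρ i)⁻¹ * (D1 *ᵥ (fun j => Real.exp (K j * ε t j) - 1)) i) t) :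
    ∀ t₁ t₂ : ℝ,
      (1 : Fin m → ℝ) ⬝ᵥ (M *ᵥ (ρ * u t₁)) = (1 : Fin m → ℝ) ⬝ᵥ (M *ᵥ (ρ * u t₂)) :=
  p_system_conserves_total_momentum_general m D1 M hD1 hD1cons ρ K hρ ε u hu
end

section
/- Let (D1, M) be a periodic first-derivative SBP operator with diagonal mass matrix (M symmetric positive definite and diagonal, M·D1 + D1ᵀ·M = 0) and D2 a periodic second-derivative SBP operator with the same mass matrix M (M·D2 = −A2, A2 symmetric positive semidefinite) such that D1·D2 = D2·D1. Let u : ℝ → ℝ^m be differentiable and satisfy the split-form Fornberg-Whitham semidiscretization ∂ₜu = −(1/3)·D1·(u∘u) − (1/3)·u∘(D1·u) − (I − D2)⁻¹·D1·u for all t. Then the discrete quadratic invariant u(t)ᵀ·M·u(t) is constant in t. -/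
/-!
Since `M` is symmetric, `d/dt (uᵀ M u) = 2 uᵀ M ∂ₜu`, so it suffices that `uᵀ M ∂ₜu = 0`.
The dispersive term drops out because `(I - D₂)⁻¹` is `M`-self-adjoint (as `M D₂ = -A₂` is
symmetric) and commutes with the `M`-skew-adjoint `D₁`, so `(I - D₂)⁻¹ D₁` is `M`-skew-adjoint.
The two cubic terms cancel: skew-adjointness moves `D₁` from `u ∘ u` onto `u`, and diagonality
of `M` moves one factor of the Hadamard product `u ∘ (D₁ u)` across the inner product.
-/

open Matrix

namespace Matrix

variable {n R : Type*} [Fintype n] [CommRing R] {J A B : Matrix n n R}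

theorem isSelfAdjoint_of_isSymm_mul (hJ : J.IsSymm) (hJA : (J * A).IsSymm) :
    J.IsSelfAdjoint A := by
  rw [Matrix.IsSelfAdjoint, IsAdjointPair, ← hJ.eq, ← transpose_mul, hJA.eq, hJ.eq]

theorem IsSkewAdjoint.mul_of_commute (hA : J.IsSkewAdjoint A) (hB : J.IsSelfAdjoint B)
    (hAB : Commute A B) : J.IsSkewAdjoint (B * A) := by
  unfold Matrix.IsSkewAdjoint Matrix.IsSelfAdjoint IsAdjointPair at *
  calc (B * A)ᵀ * J = Aᵀ * (Bᵀ * J) := by rw [transpose_mul, mul_assoc]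
    _ = J * -(B * A) := by
      rw [hB, ← mul_assoc, hA, mul_neg, neg_mul, mul_assoc, hAB.eq, mul_neg]

theorem IsSkewAdjoint.dotProduct_mulVec_mulVec (hJ : J.IsSymm) (hA : J.IsSkewAdjoint A)
    (x y : n → R) : x ⬝ᵥ J *ᵥ A *ᵥ y = -(y ⬝ᵥ J *ᵥ A *ᵥ x) := by
  have hJA : (J * A)ᵀ = -(J * A) := by
    rw [transpose_mul, hJ.eq, hA, mul_neg]
  rw [mulVec_mulVec, mulVec_mulVec, dotProduct_mulVec, ← mulVec_transpose, hJA, neg_mulVec,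
    neg_dotProduct, dotProduct_comm]

theorem IsSkewAdjoint.dotProduct_mulVec_mulVec_self [IsAddTorsionFree R] (hJ : J.IsSymm)
    (hA : J.IsSkewAdjoint A) (x : n → R) : x ⬝ᵥ J *ᵥ A *ᵥ x = 0 :=
  self_eq_neg.mp (hA.dotProduct_mulVec_mulVec hJ x x)

variable [DecidableEq n]

theorem IsSelfAdjoint.one_sub (hA : J.IsSelfAdjoint A) : J.IsSelfAdjoint (1 - A) := by
  unfold Matrix.IsSelfAdjoint IsAdjointPair at *
  rw [transpose_sub, transpose_one, sub_mul, mul_sub, hA, one_mul, mul_one]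

theorem IsSelfAdjoint.nonsing_inv (hA : J.IsSelfAdjoint A) : J.IsSelfAdjoint A⁻¹ := by
  unfold Matrix.IsSelfAdjoint IsAdjointPair at *
  by_cases hdet : IsUnit A.det
  · calc A⁻¹ᵀ * J = A⁻¹ᵀ * (Aᵀ * J) * A⁻¹ := by
          rw [hA, ← mul_assoc, mul_nonsing_inv_cancel_right _ _ hdet]
      _ = J * A⁻¹ := by
          rw [← mul_assoc, ← transpose_mul, mul_nonsing_inv _ hdet, transpose_one, one_mul]
  · simp [nonsing_inv_apply_not_isUnit A hdet]

theorem commute_nonsing_inv_right (h : Commute A B) : Commute A B⁻¹ := by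
  by_cases hdet : IsUnit B.det
  · calc A * B⁻¹ = B⁻¹ * (B * A) * B⁻¹ := by rw [nonsing_inv_mul_cancel_left _ _ hdet]
      _ = B⁻¹ * A := by rw [← h.eq, mul_assoc, mul_assoc, mul_nonsing_inv _ hdet, mul_one]
  · simp [nonsing_inv_apply_not_isUnit B hdet]

theorem IsDiag.dotProduct_mulVec_mul (hJ : J.IsDiag) (x y v : n → R) :
    x ⬝ᵥ J *ᵥ (y * v) = (x * y) ⬝ᵥ J *ᵥ v := by
  rw [← hJ.diagonal_diag]
  simp only [dotProduct, mulVec_diagonal, Pi.mul_apply]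
  exact Finset.sum_congr rfl fun _ _ => by ring

end Matrix

section Calculus

variable {n 𝕜 : Type*} [Fintype n] [NontriviallyNormedField 𝕜] {u v : 𝕜 → n → 𝕜}
  {u' v' : n → 𝕜} {t : 𝕜}

theorem HasDerivAt.dotProduct (hu : HasDerivAt u u' t) (hv : HasDerivAt v v' t) :
    HasDerivAt (fun s => u s ⬝ᵥ v s) (u' ⬝ᵥ v t + u t ⬝ᵥ v') t := by
  rw [_root_.dotProduct, _root_.dotProduct, ← Finset.sum_add_distrib]
  exact HasDerivAt.fun_sum fun i _ => (hasDerivAt_pi.mp hu i).fun_mul (hasDerivAt_pi.mp hv i)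

theorem HasDerivAt.mulVec (J : Matrix n n 𝕜) (hu : HasDerivAt u u' t) :
    HasDerivAt (fun s => J *ᵥ u s) (J *ᵥ u') t :=
  hasDerivAt_pi.mpr fun i =>
    HasDerivAt.fun_sum fun j _ => (hasDerivAt_pi.mp hu j).const_mul (J i j)

end Calculus

theorem dotProduct_mulVec_self_eq_of_orthogonal_deriv {n : Type*} [Fintype n]
    {J : Matrix n n ℝ} (hJ : J.IsSymm) {u f : ℝ → n → ℝ} (hu : ∀ t, HasDerivAt u (f t) t)
    (horth : ∀ t, u t ⬝ᵥ J *ᵥ f t = 0) (t₁ t₂ : ℝ) :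
    u t₁ ⬝ᵥ J *ᵥ u t₁ = u t₂ ⬝ᵥ J *ᵥ u t₂ := by
  have hderiv : ∀ t, HasDerivAt (fun s => u s ⬝ᵥ J *ᵥ u s) 0 t := fun t => by
    have h := (hu t).dotProduct ((hu t).mulVec J)
    rwa [dotProduct_comm, ← vecMul_transpose, hJ.eq, ← dotProduct_mulVec, horth, add_zero] at h
  exact is_const_of_deriv_eq_zero (fun t => (hderiv t).differentiableAt)
    (fun t => (hderiv t).deriv) t₁ t₂

noncomputable def fornbergWhithamRHS {n : Type*} [Fintype n] [DecidableEq n]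
    (D₁ D₂ : Matrix n n ℝ) (x : n → ℝ) : n → ℝ :=
  -((1 / 3 : ℝ) • (D₁ *ᵥ (x * x)) + (1 / 3 : ℝ) • (x * (D₁ *ᵥ x)) + (1 - D₂)⁻¹ *ᵥ (D₁ *ᵥ x))

theorem dotProduct_mulVec_fornbergWhithamRHS {n : Type*} [Fintype n] [DecidableEq n]
    {M D₁ D₂ : Matrix n n ℝ} (hM : M.IsDiag) (hD₁ : M.IsSkewAdjoint D₁)
    (hD₂ : M.IsSelfAdjoint D₂) (hcomm : Commute D₁ D₂) (x : n → ℝ) :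
    x ⬝ᵥ M *ᵥ fornbergWhithamRHS D₁ D₂ x = 0 := by
  have hdisp : M.IsSkewAdjoint ((1 - D₂)⁻¹ * D₁) :=
    hD₁.mul_of_commute hD₂.one_sub.nonsing_inv
      (commute_nonsing_inv_right ((Commute.one_right D₁).sub_right hcomm))
  have hcubic : x ⬝ᵥ M *ᵥ D₁ *ᵥ (x * x) = -(x ⬝ᵥ M *ᵥ (x * D₁ *ᵥ x)) := by
    rw [hD₁.dotProduct_mulVec_mulVec hM.isSymm, hM.dotProduct_mulVec_mul]
  have hdisp₀ := hdisp.dotProduct_mulVec_mulVec_self hM.isSymm x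
  rw [← mulVec_mulVec] at hdisp₀
  simp only [fornbergWhithamRHS, mulVec_neg, mulVec_add, mulVec_smul, dotProduct_neg,
    dotProduct_add, dotProduct_smul, hcubic, hdisp₀, smul_eq_mul]
  ring

theorem fornberg_whitham_conserves_quadratic_invariant_general
    (m : ℕ) (D1 D2 M A2 : Matrix (Fin m) (Fin m) ℝ)
    (hMdiag : M.IsDiag)
    (hD1 : M * D1 + D1ᵀ * M = 0)
    (hA2 : A2.PosSemidef)
    (hD2 : M * D2 = -A2)
    (hcomm : D1 * D2 = D2 * D1)
    (u : ℝ → Fin m → ℝ)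
    (hu : ∀ t, HasDerivAt u
      (-((1 / 3 : ℝ) • (D1 *ᵥ (u t * u t))
        + (1 / 3 : ℝ) • (u t * (D1 *ᵥ u t))
        + (1 - D2)⁻¹ *ᵥ (D1 *ᵥ u t))) t) :
    ∀ t₁ t₂ : ℝ, u t₁ ⬝ᵥ (M *ᵥ u t₁) = u t₂ ⬝ᵥ (M *ᵥ u t₂) := by
  have hD1skew : M.IsSkewAdjoint D1 := by
    rw [Matrix.IsSkewAdjoint, IsAdjointPair, mul_neg]
    exact eq_neg_of_add_eq_zero_right hD1
  have hD2self : M.IsSelfAdjoint D2 := by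
    refine isSelfAdjoint_of_isSymm_mul hMdiag.isSymm ?_
    rw [hD2]
    exact (isHermitian_iff_isSymm.mp hA2.isHermitian).neg
  exact dotProduct_mulVec_self_eq_of_orthogonal_deriv hMdiag.isSymm hu
    (fun t => dotProduct_mulVec_fornbergWhithamRHS hMdiag hD1skew hD2self hcomm (u t))

/-- The split-form Fornberg-Whitham semidiscretization
`∂ₜu = −(1/3) D1 (u∘u) − (1/3) u∘(D1 u) − (I − D2)⁻¹ D1 u`
with commuting periodic SBP operators `D1`, `D2` sharing a diagonal
symmetric positive definite mass matrix `M` conserves the discrete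
quadratic invariant `uᵀ·M·u`. -/
theorem fornberg_whitham_conserves_quadratic_invariant
    (m : ℕ) (D1 D2 M A2 : Matrix (Fin m) (Fin m) ℝ)
    (hM : M.PosDef) (hMdiag : M.IsDiag)
    (hD1 : M * D1 + D1ᵀ * M = 0)
    (hA2 : A2.PosSemidef)
    (hD2 : M * D2 = -A2)
    (hcomm : D1 * D2 = D2 * D1)
    (u : ℝ → Fin m → ℝ)
    (hu : ∀ t, HasDerivAt u
      (-((1 / 3 : ℝ) • (D1 *ᵥ (u t * u t))
        + (1 / 3 : ℝ) • (u t * (D1 *ᵥ u t))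
        + (1 - D2)⁻¹ *ᵥ (D1 *ᵥ u t))) t) :
    ∀ t₁ t₂ : ℝ, u t₁ ⬝ᵥ (M *ᵥ u t₁) = u t₂ ⬝ᵥ (M *ᵥ u t₂) :=
  fornberg_whitham_conserves_quadratic_invariant_general m D1 D2 M A2 hMdiag hD1 hA2 hD2 hcomm u hu
end
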